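/- Let S = {(h,ℓ) ∈ ℝ² : ℓ ≠ 0 and there exists x ∈ (−1,1) with 2(h−x)(1−x²) − ℓ² > 0}. Then the map S → ℝ², (h,ℓ) ↦ (F(h,ℓ), ℓ), is injective, where F(h,ℓ) = ∫_{−1}^{1} √(max(2(h−x)(1−x²) − ℓ², 0))/(1−x²) dx. -/
import Mathlib


open MeasureTheory intervalIntegral

/-- The first action of the spherical pendulum (times `π`):
`F(h,ℓ) = ∫_{−1}^{1} √(max(2(h−x)(1−x²) − ℓ², 0))/(1−x²) dx`. -/
noncomputable def pendulumAction (h ℓ : ℝ) : ℝ :=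
  ∫ x in (-1 : ℝ)..1, Real.sqrt (max (2 * (h - x) * (1 - x ^ 2) - ℓ ^ 2) 0) / (1 - x ^ 2)

lemma pendulum_integrand_contOn (h ℓ : ℝ) (hℓ : ℓ ≠ 0) :
    ContinuousOn (fun x : ℝ => Real.sqrt (max (2 * (h - x) * (1 - x ^ 2) - ℓ ^ 2) 0) / (1 - x ^ 2))
      (Set.Icc (-1 : ℝ) 1) := by
  have hg : Continuous fun x : ℝ => 2 * (h - x) * (1 - x ^ 2) - ℓ ^ 2 := by continuity
  intro x hx
  by_cases hx2 : 1 - x ^ 2 = 0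
  · -- near x, the polynomial is negative, so the function is eventually 0
    have hgx : (2 * (h - x) * (1 - x ^ 2) - ℓ ^ 2) < 0 := by
      rw [hx2]
      have : (0:ℝ) < ℓ ^ 2 := by positivity
      linarith
    have hev : ∀ᶠ y in nhds x, 2 * (h - y) * (1 - y ^ 2) - ℓ ^ 2 < 0 :=
      hg.continuousAt.eventually_lt continuousAt_const hgx
    have heq : (fun y : ℝ => Real.sqrt (max (2 * (h - y) * (1 - y ^ 2) - ℓ ^ 2) 0) / (1 - y ^ 2))
        =ᶠ[nhds x] fun _ => (0:ℝ) := by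
      filter_upwards [hev] with y hy
      rw [max_eq_right hy.le, Real.sqrt_zero, zero_div]
    exact (continuousAt_const.congr heq.symm).continuousWithinAt
  · exact (((Real.continuous_sqrt.comp (hg.max continuous_const)).continuousAt.div
      ((continuous_const.sub (continuous_pow 2)).continuousAt) hx2)).continuousWithinAt

lemma pendulumAction_lt (ℓ h₁ h₂ : ℝ) (hℓ : ℓ ≠ 0) (hlt : h₁ < h₂)
    (hw : ∃ x ∈ Set.Ioo (-1 : ℝ) 1, 0 < 2 * (h₁ - x) * (1 - x ^ 2) - ℓ ^ 2) :
    pendulumAction h₁ ℓ < pendulumAction h₂ ℓ := by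
  obtain ⟨x₀, hx₀, hP₀⟩ := hw
  have hx₀2 : (0:ℝ) < 1 - x₀ ^ 2 := by nlinarith [hx₀.1, hx₀.2]
  apply intervalIntegral.integral_lt_integral_of_continuousOn_of_le_of_exists_lt
    (by norm_num) (pendulum_integrand_contOn h₁ ℓ hℓ) (pendulum_integrand_contOn h₂ ℓ hℓ)
  · -- pointwise ≤ on (-1, 1]
    intro x hx
    rcases eq_or_lt_of_le (by nlinarith [hx.1, hx.2] : (0:ℝ) ≤ 1 - x ^ 2) with h0 | h0
    · rw [← h0]; simp
    · apply div_le_div_of_nonneg_right ?_ h0.le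
      apply Real.sqrt_le_sqrt
      apply max_le_max _ le_rfl
      nlinarith
  · -- strict inequality at the witness point
    refine ⟨x₀, ⟨hx₀.1.le, hx₀.2.le⟩, ?_⟩
    have hP₂ : 2 * (h₁ - x₀) * (1 - x₀ ^ 2) - ℓ ^ 2
        < 2 * (h₂ - x₀) * (1 - x₀ ^ 2) - ℓ ^ 2 := by nlinarith
    rw [div_lt_div_iff_of_pos_right hx₀2]
    rw [max_eq_left hP₀.le, max_eq_left (hP₀.trans hP₂).le]
    exact Real.sqrt_lt_sqrt hP₀.le hP₂

/-- Let `S = {(h,ℓ) : ℓ ≠ 0 and ∃ x ∈ (−1,1), 2(h−x)(1−x²) − ℓ² > 0}`.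
Then the map `S → ℝ²`, `(h,ℓ) ↦ (F(h,ℓ), ℓ)`, is injective. -/
theorem action_map_injective :
    Set.InjOn (fun p : ℝ × ℝ => (pendulumAction p.1 p.2, p.2))
      {p : ℝ × ℝ | p.2 ≠ 0 ∧
        ∃ x ∈ Set.Ioo (-1 : ℝ) 1, 0 < 2 * (p.1 - x) * (1 - x ^ 2) - p.2 ^ 2} := by
  rintro ⟨h₁, ℓ₁⟩ ⟨hℓ₁, hw₁⟩ ⟨h₂, ℓ₂⟩ ⟨hℓ₂, hw₂⟩ heq
  simp only [Prod.mk.injEq] at heq ⊢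
  obtain ⟨hF, hℓ⟩ := heq
  subst hℓ
  refine ⟨?_, rfl⟩
  rcases lt_trichotomy h₁ h₂ with h | h | h
  · exact absurd hF (pendulumAction_lt ℓ₁ h₁ h₂ hℓ₁ h hw₁).ne
  · exact h
  · exact absurd hF.symm (pendulumAction_lt ℓ₁ h₂ h₁ hℓ₁ h hw₂).ne
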